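/- arXiv:1010.5032 — 2 statements merged into one kernel-verified Lean document; each statement's English description precedes it below -/
import Mathlib

section
/- Let r = u^λ(p) where p = (0, x¹) with x¹ ∈ (-1,1), and u^λ is the conformal isotropy flow of the diamond with tips p₀ = (-1,𝟎), q₀ = (1,𝟎) in ℝ^{1,1}, acting on null coordinates x^± = t ± x by x^± ↦ ((1+x^±) - e^{-λ}(1-x^±))/((1+x^±) + e^{-λ}(1-x^±)). Then (1 + t(r))² - x(r)² = e^{2λ} · ((1 - t(r))² - x(r)²), where t(r), x(r) are the Cartesian coordinates of r. Consequently λ = (1/2) log( d_η(p₀,r)² / d_η(r,q₀)² ). -/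
/-!
In the null coordinates `x^± = t ± x` the Minkowski quantities factor as
`(1 ± t)² - x² = (1 ± x⁺)(1 ± x⁻)`, and the flow acts on each null coordinate by
`(1 + x)/(1 - x) ↦ e^λ (1 + x)/(1 - x)`. Multiplying over both null coordinates multiplies
`d_η(p₀,r)² / d_η(r,q₀)²` by `e^{2λ}` relative to its value at `p`, which is `1` on the slice `t = 0`.
-/

/-- Action of the conformal isotropy flow on one null coordinate. -/
noncomputable def nullFlow (l s : ℝ) : ℝ :=
  ((1 + s) - Real.exp (-l) * (1 - s)) / ((1 + s) + Real.exp (-l) * (1 - s))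

/-- The conformal isotropy flow `u^λ` of the standard diamond in `ℝ^{1,1}`. -/
noncomputable def uFlow (l : ℝ) (p : ℝ × ℝ) : ℝ × ℝ :=
  ((nullFlow l (p.1 + p.2) + nullFlow l (p.1 - p.2)) / 2,
   (nullFlow l (p.1 + p.2) - nullFlow l (p.1 - p.2)) / 2)

open Real Set

section NullFlow

variable (l : ℝ) {s : ℝ}

lemma nullFlow_denom_pos (hs : s ∈ Ioo (-1 : ℝ) 1) :
    0 < (1 + s) + exp (-l) * (1 - s) := by
  have : 0 < exp (-l) * (1 - s) := mul_pos (exp_pos _) (by linarith [hs.2])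
  linarith [hs.1]

lemma one_add_nullFlow (hD : (1 + s) + exp (-l) * (1 - s) ≠ 0) :
    1 + nullFlow l s = 2 * (1 + s) / ((1 + s) + exp (-l) * (1 - s)) := by
  rw [nullFlow]; field_simp; ring

lemma one_sub_nullFlow (hD : (1 + s) + exp (-l) * (1 - s) ≠ 0) :
    1 - nullFlow l s = 2 * exp (-l) * (1 - s) / ((1 + s) + exp (-l) * (1 - s)) := by
  rw [nullFlow]; field_simp; ring

lemma one_sub_nullFlow_pos (hs : s ∈ Ioo (-1 : ℝ) 1) : 0 < 1 - nullFlow l s := by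
  rw [one_sub_nullFlow l (nullFlow_denom_pos l hs).ne']
  have : 0 < 1 - s := by linarith [hs.2]
  have := nullFlow_denom_pos l hs
  positivity

lemma one_add_nullFlow_mul_one_sub (hD : (1 + s) + exp (-l) * (1 - s) ≠ 0) :
    (1 + nullFlow l s) * (1 - s) = exp l * ((1 - nullFlow l s) * (1 + s)) := by
  rw [one_add_nullFlow l hD, one_sub_nullFlow l hD]
  have h : exp l * exp (-l) = 1 := by rw [← exp_add, add_neg_cancel, exp_zero]
  field_simp
  linear_combination (-(1 + s) * (1 - s)) * h

end NullFlow

section Minkowski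

variable (l : ℝ) (p : ℝ × ℝ)

lemma one_add_uFlow_fst_sq_sub_sq :
    (1 + (uFlow l p).1) ^ 2 - (uFlow l p).2 ^ 2 =
      (1 + nullFlow l (p.1 + p.2)) * (1 + nullFlow l (p.1 - p.2)) := by
  simp only [uFlow]; ring

lemma one_sub_uFlow_fst_sq_sub_sq :
    (1 - (uFlow l p).1) ^ 2 - (uFlow l p).2 ^ 2 =
      (1 - nullFlow l (p.1 + p.2)) * (1 - nullFlow l (p.1 - p.2)) := by
  simp only [uFlow]; ring

lemma one_sub_uFlow_fst_sq_sub_sq_pos (hpu : p.1 + p.2 ∈ Ioo (-1 : ℝ) 1)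
    (hpv : p.1 - p.2 ∈ Ioo (-1 : ℝ) 1) :
    0 < (1 - (uFlow l p).1) ^ 2 - (uFlow l p).2 ^ 2 := by
  rw [one_sub_uFlow_fst_sq_sub_sq]
  exact mul_pos (one_sub_nullFlow_pos l hpu) (one_sub_nullFlow_pos l hpv)

end Minkowski

lemma one_add_uFlow_fst_sq_sub_sq_of_time_zero {x1 : ℝ} (hx1 : x1 ∈ Ioo (-1 : ℝ) 1) (l : ℝ) :
    (1 + (uFlow l (0, x1)).1) ^ 2 - (uFlow l (0, x1)).2 ^ 2 =
      exp (2 * l) * ((1 - (uFlow l (0, x1)).1) ^ 2 - (uFlow l (0, x1)).2 ^ 2) := by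
  have hx1' : -x1 ∈ Ioo (-1 : ℝ) 1 := ⟨by linarith [hx1.2], by linarith [hx1.1]⟩
  have hu := one_add_nullFlow_mul_one_sub l (nullFlow_denom_pos l hx1).ne'
  have hv := one_add_nullFlow_mul_one_sub l (nullFlow_denom_pos l hx1').ne'
  have hx : 0 < (1 - x1) * (1 + x1) := mul_pos (by linarith [hx1.2]) (by linarith [hx1.1])
  rw [one_add_uFlow_fst_sq_sub_sq, one_sub_uFlow_fst_sq_sub_sq, zero_add, zero_sub,
    show 2 * l = l + l by ring, exp_add]
  refine mul_right_cancel₀ hx.ne' ?_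
  linear_combination (1 + nullFlow l (-x1)) * (1 + x1) * hu
    + exp l * (1 - nullFlow l x1) * (1 + x1) * hv

/-- for `r = u^λ((0, x¹))` with `x¹ ∈ (-1,1)` one has
`(1 + t(r))² - x(r)² = e^{2λ}((1 - t(r))² - x(r)²)`, and consequently
`λ = ½ log(d_η(p₀,r)² / d_η(r,q₀)²)`. -/
theorem stmt_4 (x1 : ℝ) (hx1 : x1 ∈ Set.Ioo (-1 : ℝ) 1) (l : ℝ) :
    (1 + (uFlow l (0, x1)).1) ^ 2 - (uFlow l (0, x1)).2 ^ 2 =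
      Real.exp (2 * l) *
        ((1 - (uFlow l (0, x1)).1) ^ 2 - (uFlow l (0, x1)).2 ^ 2) ∧
    l = (1 / 2) * Real.log
        (((1 + (uFlow l (0, x1)).1) ^ 2 - (uFlow l (0, x1)).2 ^ 2) /
         ((1 - (uFlow l (0, x1)).1) ^ 2 - (uFlow l (0, x1)).2 ^ 2)) := by
  have key := one_add_uFlow_fst_sq_sub_sq_of_time_zero hx1 l
  have hQ := one_sub_uFlow_fst_sq_sub_sq_pos l (0, x1) (by simpa using hx1)
    (by simpa using ⟨by linarith [hx1.2], by linarith [hx1.1]⟩)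
  refine ⟨key, ?_⟩
  rw [key, mul_div_cancel_right₀ _ hQ.ne', log_exp]
  ring
end

section
/- Let d : X × X → ℝ≥0 satisfy the reverse triangle inequality on a partially ordered set: d(a,c) ≥ d(a,b) + d(b,c) for a ≤ b ≤ c. Fix p ≤ r_λ ≤ r' ≤ q and p ≤ r ≤ r' with r ≤ q, and suppose: (a1) d(p,r_λ) + d(r_λ,r') = d(p,r'); (a2) d(r_λ,r') + d(r',q) = d(r_λ,q); (b1) d(p,r) = e^λ · d(r,q); (b2) d(p,r_λ) = e^λ · d(r_λ,q). Then d(r_λ, r') ≥ d(r, r'). -/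
/-!
Compare the routes through `r` with the maximal routes through `r_λ`. Via `p`:
`d(p,r) + d(r,r') ≤ d(p,r') = d(p,r_λ) + d(r_λ,r')`; via `q`:
`d(r,r') + d(r',q) ≤ d(r,q)` with `d(r',q) = d(r_λ,q) - d(r_λ,r')`. On the level set
`d(p,·) = e^λ d(·,q)`, so writing `δ = d(r,r') - d(r_λ,r')` the first inequality says
`e^λ (d(r,q) - d(r_λ,q)) ≤ -δ` and the second `δ ≤ d(r,q) - d(r_λ,q)`; together
`(1 + e^λ) δ ≤ 0`.
-/

theorem le_of_mul_add_le_of_add_le {R : Type*} [CommRing R] [LinearOrder R]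
    [IsStrictOrderedRing R] {t u v x y : R} (ht : 0 ≤ t)
    (h₁ : t * u + x ≤ t * v + y) (h₂ : x + v ≤ y + u) : x ≤ y := by
  have h : (1 + t) * x ≤ (1 + t) * y := by
    nlinarith [mul_le_mul_of_nonneg_left h₂ ht]
  exact le_of_mul_le_mul_left h (by positivity)

theorem stmt_7_general {X : Type*} [PartialOrder X] (d : X → X → ℝ)
    (hrev : ∀ a b c : X, a ≤ b → b ≤ c → d a b + d b c ≤ d a c)
    (p rl r r' q : X) (l : ℝ)
    (hr'q : r' ≤ q)
    (hpr : p ≤ r) (hrr' : r ≤ r')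
    (ha1 : d p rl + d rl r' = d p r')
    (ha2 : d rl r' + d r' q = d rl q)
    (hb1 : d p r = Real.exp l * d r q)
    (hb2 : d p rl = Real.exp l * d rl q) :
    d r r' ≤ d rl r' := by
  have via_p : Real.exp l * d r q + d r r' ≤ Real.exp l * d rl q + d rl r' := by
    rw [← hb1, ← hb2, ha1]
    exact hrev p r r' hpr hrr'
  have via_q : d r r' + d rl q ≤ d rl r' + d r q := by
    linarith [hrev r r' q hrr' hr'q]
  exact le_of_mul_add_le_of_add_le (Real.exp_pos l).le via_p via_q

/-- key step of Proposition 3.5 -- if `r` and `r_λ` lie on the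
same level set of `λ(·) = log (d p · / d · q)` and the geodesic through
`r_λ, r'` is maximal, then `d r_λ r' ≥ d r r'`. -/
theorem stmt_7 {X : Type*} [PartialOrder X] (d : X → X → ℝ)
    (hnonneg : ∀ a b, 0 ≤ d a b)
    (hrev : ∀ a b c : X, a ≤ b → b ≤ c → d a b + d b c ≤ d a c)
    (p rl r r' q : X) (l : ℝ)
    (hprl : p ≤ rl) (hrlr' : rl ≤ r') (hr'q : r' ≤ q)
    (hpr : p ≤ r) (hrr' : r ≤ r') (hrq : r ≤ q)
    (hdrlq : 0 < d rl q) (hdrq : 0 < d r q)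
    (ha1 : d p rl + d rl r' = d p r')
    (ha2 : d rl r' + d r' q = d rl q)
    (hb1 : d p r = Real.exp l * d r q)
    (hb2 : d p rl = Real.exp l * d rl q) :
    d r r' ≤ d rl r' :=
  stmt_7_general d hrev p rl r r' q l hr'q hpr hrr' ha1 ha2 hb1 hb2
end
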